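/- Let i, j ∈ I with a_{ij} = −1 and m ∈ ℤ. Set F := (v^{1/2}E_{j,m}E_{i,m} − v^{−1/2}E_{i,m}E_{j,m})/(v − v^{−1}) and G := E_{j,m+1}K_{j,m}^{−1} in 𝒜. Then the quantum Serre relation holds for F and G: F²G − (v + v^{−1})FGF + GF² = 0. -/
import Mathlib


/-!
Braid group action on the twisted semi-derived Hall algebra (Contu, arXiv:2410.18604).

We work with the algebra `𝒜 = 𝒮𝒟ℋ_tw(C^b(𝒫))` given by its presentation
(Proposition `prop_presenentation_semiderived_E_i` of the paper): generators
`E_{i,m}`, `K_{i,m}`, `K_{i,m}⁻¹` (`i ∈ I`, `m ∈ ℤ`) over `F = ℚ(v^{1/2})`,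
subject to the relations (SD0)–(SD5).
-/

noncomputable section

namespace SDHall

/-- The field `ℚ(v^{1/2})` of rational functions over `ℚ` in one indeterminate `v^{1/2}`. -/
abbrev F₀ : Type := RatFunc ℚ

/-- The indeterminate `v^{1/2}`. -/
def sq : F₀ := RatFunc.X

/-- `v := (v^{1/2})²`. -/
def v : F₀ := sq ^ 2

/-- The sign `(-1)^n` for an integer `n`. -/
def sgn (n : ℤ) : ℤ := (((-1 : ℤˣ) ^ n : ℤˣ) : ℤ)

/-- Generators `E_{i,m}`, `K_{i,m}`, `K_{i,m}⁻¹` of the presented algebra. -/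
inductive Gen (I : Type) : Type
  | E : I → ℤ → Gen I
  | K : I → ℤ → Gen I
  | Kinv : I → ℤ → Gen I

variable {I : Type}

def e (i : I) (m : ℤ) : FreeAlgebra F₀ (Gen I) := FreeAlgebra.ι F₀ (Gen.E i m)
def κ (i : I) (m : ℤ) : FreeAlgebra F₀ (Gen I) := FreeAlgebra.ι F₀ (Gen.K i m)
def κ' (i : I) (m : ℤ) : FreeAlgebra F₀ (Gen I) := FreeAlgebra.ι F₀ (Gen.Kinv i m)

/-- The defining relations (SD0)–(SD5) of the twisted semi-derived Hall algebra:
(SD0) `K_{i,m}K_{i,m}⁻¹ = 1 = K_{i,m}⁻¹K_{i,m}`;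
(SD1) each `K_{i,m}` is central;
(SD2) `E_{i,m}E_{j,m} = E_{j,m}E_{i,m}` if `a_{ij} = 0`;
(SD3) `E_{i,m}²E_{j,m} − (v+v⁻¹)E_{i,m}E_{j,m}E_{i,m} + E_{j,m}E_{i,m}² = 0` if `a_{ij} = −1`;
(SD4) `E_{i,m+1}E_{j,m} = v^{a_{ij}}E_{j,m}E_{i,m+1} + δ_{ij}(1−v²)K_{i,m}`
      (split into the cases `i ≠ j` and `i = j`);
(SD5) `E_{j,r}E_{i,l} = v^{−(−1)^{r−l}a_{ij}}E_{i,l}E_{j,r}` for `r > l+1`. -/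
inductive Rel (a : I → I → ℤ) : FreeAlgebra F₀ (Gen I) → FreeAlgebra F₀ (Gen I) → Prop
  | sd0a (i : I) (m : ℤ) : Rel a (κ i m * κ' i m) 1
  | sd0b (i : I) (m : ℤ) : Rel a (κ' i m * κ i m) 1
  | sd1 (i : I) (m : ℤ) (x : FreeAlgebra F₀ (Gen I)) : Rel a (κ i m * x) (x * κ i m)
  | sd2 (i j : I) (m : ℤ) : a i j = 0 → Rel a (e i m * e j m) (e j m * e i m)
  | sd3 (i j : I) (m : ℤ) : a i j = -1 →
      Rel a (e i m ^ 2 * e j m - (v + v⁻¹) • (e i m * e j m * e i m) + e j m * e i m ^ 2) 0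
  | sd4_ne (i j : I) (m : ℤ) : i ≠ j →
      Rel a (e i (m + 1) * e j m) ((v ^ (a i j)) • (e j m * e i (m + 1)))
  | sd4_eq (i : I) (m : ℤ) :
      Rel a (e i (m + 1) * e i m)
        ((v ^ (a i i)) • (e i m * e i (m + 1)) + ((1 : F₀) - v ^ 2) • κ i m)
  | sd5 (i j : I) (r l : ℤ) : r > l + 1 →
      Rel a (e j r * e i l) ((v ^ (-(sgn (r - l)) * a i j)) • (e i l * e j r))

/-- The twisted semi-derived Hall algebra `𝒜`, presented by generators and relations. -/
abbrev A (a : I → I → ℤ) : Type := RingQuot (Rel a)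

/-- The generator `E_{i,m}` of `𝒜`. -/
def E (a : I → I → ℤ) (i : I) (m : ℤ) : A a := RingQuot.mkAlgHom F₀ (Rel a) (e i m)

/-- The generator `K_{i,m}` of `𝒜`. -/
def K (a : I → I → ℤ) (i : I) (m : ℤ) : A a := RingQuot.mkAlgHom F₀ (Rel a) (κ i m)

/-- The generator `K_{i,m}⁻¹` of `𝒜`. -/
def Kinv (a : I → I → ℤ) (i : I) (m : ℤ) : A a := RingQuot.mkAlgHom F₀ (Rel a) (κ' i m)

/-- `a` is a simply-laced generalized Cartan matrix: symmetric, `a_{ii} = 2`,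
and `a_{ij} ∈ {0, −1}` for `i ≠ j`. -/
def IsCartan (a : I → I → ℤ) : Prop :=
  (∀ i j, a i j = a j i) ∧ (∀ i, a i i = 2) ∧ ∀ i j, i ≠ j → a i j = 0 ∨ a i j = -1

/-- The element `(v^{1/2}E_{i,m}E_{j,m} − v^{−1/2}E_{j,m}E_{i,m})/(v − v^{−1})` of `𝒜`. -/
def T (a : I → I → ℤ) (i j : I) (m : ℤ) : A a :=
  (v - v⁻¹)⁻¹ • (sq • (E a i m * E a j m) - sq⁻¹ • (E a j m * E a i m))

/-- The defining formulas for the braid group operator `σᵢ` on the generators: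
`σᵢ(E_{i,m}) = E_{i,m+1}K_{i,m}⁻¹`;
`σᵢ(E_{j,m}) = (v^{1/2}E_{i,m}E_{j,m} − v^{−1/2}E_{j,m}E_{i,m})/(v − v^{−1})` if `a_{ij} = −1`;
`σᵢ(E_{j,m}) = E_{j,m}` if `a_{ij} = 0`;
`σᵢ(K_{i,m}) = K_{i,m}⁻¹`; `σᵢ(K_{j,m}) = K_{i,m}K_{j,m}` if `a_{ij} = −1`;
`σᵢ(K_{j,m}) = K_{j,m}` if `a_{ij} = 0`. -/
def SigmaSpec (a : I → I → ℤ) (i : I) (σ : A a →ₐ[F₀] A a) : Prop :=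
  (∀ m : ℤ, σ (E a i m) = E a i (m + 1) * Kinv a i m) ∧
  (∀ (j : I) (m : ℤ), a i j = -1 → σ (E a j m) = T a i j m) ∧
  (∀ (j : I) (m : ℤ), a i j = 0 → σ (E a j m) = E a j m) ∧
  (∀ m : ℤ, σ (K a i m) = Kinv a i m) ∧
  (∀ (j : I) (m : ℤ), a i j = -1 → σ (K a j m) = K a i m * K a j m) ∧
  (∀ (j : I) (m : ℤ), a i j = 0 → σ (K a j m) = K a j m)

/-- The defining formulas for the inverse operator `σᵢ'` on the generators:
`σᵢ'(E_{i,m}) = E_{i,m−1}K_{i,m−1}⁻¹`;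
`σᵢ'(E_{j,m}) = (v^{1/2}E_{j,m}E_{i,m} − v^{−1/2}E_{i,m}E_{j,m})/(v − v^{−1})` if `a_{ij} = −1`;
`σᵢ'(E_{j,m}) = E_{j,m}` if `a_{ij} = 0`;
`σᵢ'(K_{i,m}) = K_{i,m}⁻¹`; `σᵢ'(K_{j,m}) = K_{i,m}K_{j,m}` if `a_{ij} = −1`;
`σᵢ'(K_{j,m}) = K_{j,m}` if `a_{ij} = 0`. -/
def SigmaSpec' (a : I → I → ℤ) (i : I) (σ : A a →ₐ[F₀] A a) : Prop :=
  (∀ m : ℤ, σ (E a i m) = E a i (m - 1) * Kinv a i (m - 1)) ∧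
  (∀ (j : I) (m : ℤ), a i j = -1 → σ (E a j m) = T a j i m) ∧
  (∀ (j : I) (m : ℤ), a i j = 0 → σ (E a j m) = E a j m) ∧
  (∀ m : ℤ, σ (K a i m) = Kinv a i m) ∧
  (∀ (j : I) (m : ℤ), a i j = -1 → σ (K a j m) = K a i m * K a j m) ∧
  (∀ (j : I) (m : ℤ), a i j = 0 → σ (K a j m) = K a j m)

end SDHall


noncomputable instance : Algebra ℕ SDHall.F₀ := Semiring.toNatAlgebra
noncomputable instance : Algebra ℤ SDHall.F₀ := Ring.toIntAlgebra _

namespace SDHall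

variable {I : Type} {a : I → I → ℤ}

lemma rel_eq {x y : FreeAlgebra F₀ (Gen I)} (h : Rel a x y) :
    RingQuot.mkAlgHom F₀ (Rel a) x = RingQuot.mkAlgHom F₀ (Rel a) y :=
  RingQuot.mkAlgHom_rel F₀ h

lemma sq_ne_zero : (sq : F₀) ≠ 0 := RatFunc.X_ne_zero

lemma v_ne_zero : (v : F₀) ≠ 0 := pow_ne_zero _ sq_ne_zero

lemma K_comm (i : I) (m : ℤ) (y : A a) : K a i m * y = y * K a i m := by
  obtain ⟨z, rfl⟩ := RingQuot.mkAlgHom_surjective F₀ (Rel a) y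
  simpa [K, A, map_mul] using rel_eq (Rel.sd1 i m z)

lemma K_mul_Kinv (i : I) (m : ℤ) : (K a i m : A a) * Kinv a i m = 1 := by
  simpa [K, Kinv, map_mul] using rel_eq (Rel.sd0a (a := a) i m)

lemma Kinv_mul_K (i : I) (m : ℤ) : (Kinv a i m : A a) * K a i m = 1 := by
  simpa [K, Kinv, map_mul] using rel_eq (Rel.sd0b (a := a) i m)

lemma Kinv_comm (i : I) (m : ℤ) (y : A a) : Kinv a i m * y = y * Kinv a i m := by
  calc Kinv a i m * y = Kinv a i m * (y * (K a i m * Kinv a i m)) := by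
        rw [K_mul_Kinv, mul_one]
    _ = Kinv a i m * ((y * K a i m) * Kinv a i m) := by rw [← mul_assoc y]
    _ = Kinv a i m * ((K a i m * y) * Kinv a i m) := by rw [← K_comm i m y]
    _ = y * Kinv a i m := by rw [← mul_assoc, ← mul_assoc, Kinv_mul_K, one_mul]

lemma serre_rel (i j : I) (m : ℤ) (h : a i j = -1) :
    (E a i m) ^ 2 * E a j m - (v + v⁻¹) • (E a i m * E a j m * E a i m)
      + E a j m * (E a i m) ^ 2 = 0 := by
  simpa [E, map_mul, map_sub, map_add, map_smul, map_pow] using rel_eq (Rel.sd3 i j m h)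

lemma r1_rel (i j : I) (m : ℤ) (hne : j ≠ i) (h : a j i = -1) :
    E a j (m + 1) * E a i m = v⁻¹ • (E a i m * E a j (m + 1)) := by
  have := rel_eq (Rel.sd4_ne (a := a) j i m hne)
  rw [h] at this
  simpa [E, map_mul, map_smul, zpow_neg, zpow_one] using this

lemma r2_rel (j : I) (m : ℤ) (h : a j j = 2) :
    E a j (m + 1) * E a j m = (v ^ 2) • (E a j m * E a j (m + 1)) + (1 - v ^ 2) • K a j m := by
  have := rel_eq (Rel.sd4_eq (a := a) j m)
  rw [h] at this
  simpa [E, K, map_mul, map_smul, map_add] using this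

end SDHall

open SDHall

set_option maxHeartbeats 1000000

/-- For `a_{ij} = −1` and `m ∈ ℤ`, set
`F := (v^{1/2}E_{j,m}E_{i,m} − v^{−1/2}E_{i,m}E_{j,m})/(v − v^{−1})` and
`G := E_{j,m+1}K_{j,m}⁻¹`. Then `F²G − (v + v⁻¹)FGF + GF² = 0` in `𝒜`. -/
theorem serre_for_sigma'_images (I : Type) [Fintype I] (a : I → I → ℤ)
    (hA : IsCartan a) (i j : I) (hij : a i j = -1) (m : ℤ) :
    (T a j i m) ^ 2 * (E a j (m + 1) * Kinv a j m)
      - (v + v⁻¹) • (T a j i m * (E a j (m + 1) * Kinv a j m) * T a j i m)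
      + (E a j (m + 1) * Kinv a j m) * (T a j i m) ^ 2 = 0 := by
  obtain ⟨hsymm, hdiag, -⟩ := hA
  have hji : a j i = -1 := (hsymm j i).trans hij
  have hne : j ≠ i := by
    rintro rfl
    rw [hdiag j] at hij
    norm_num at hij
  have hsq : (sq : F₀) ≠ 0 := sq_ne_zero
  have hv : (v : F₀) ≠ 0 := v_ne_zero
  set ei := E a i m with hei
  set ej := E a j m with hej
  set e' := E a j (m + 1) with he'
  set k := K a j m with hk
  set kv := Kinv a j m with hkv
  have r1 : e' * ei = v⁻¹ • (ei * e') := r1_rel i j m hne hji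
  have r2 : e' * ej = (v ^ 2) • (ej * e') + (1 - v ^ 2) • k := r2_rel j m (hdiag j)
  have hkx : ∀ y : A a, k * y = y * k := K_comm j m
  have hkvx : ∀ y : A a, kv * y = y * kv := Kinv_comm j m
  set X : A a := sq • (ej * ei) - sq⁻¹ • (ei * ej) with hX
  have hT : T a j i m = (v - v⁻¹)⁻¹ • X := by rw [hX, hej, hei]; rfl
  set α : F₀ := (1 - v ^ 2) * (sq - sq⁻¹ * v⁻¹) with hα
  -- pushing e' through products
  have h1 : e' * (ej * ei) = (v ^ 2 * v⁻¹) • (ej * (ei * e')) + (1 - v ^ 2) • (ei * k) := by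
    rw [← mul_assoc, r2, add_mul, smul_mul_assoc, smul_mul_assoc, mul_assoc, r1,
      mul_smul_comm, smul_smul, hkx ei]
  have h2 : e' * (ei * ej) = (v⁻¹ * v ^ 2) • (ei * (ej * e')) + (v⁻¹ * (1 - v ^ 2)) • (ei * k) := by
    rw [← mul_assoc, r1, smul_mul_assoc, mul_assoc, r2, mul_add, mul_smul_comm,
      mul_smul_comm, smul_add, smul_smul, smul_smul]
  have hEA : e' * X = v • (X * e') + α • (ei * k) := by
    rw [hX]
    simp only [mul_sub, sub_mul, smul_mul_assoc, mul_smul_comm, mul_assoc]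
    rw [h1, h2]
    match_scalars <;> (simp only [hα, v]; field_simp [hsq]; try ring)
  -- the Serre relation, normalized
  have hserN : ej * (ei * ei) = (v + v⁻¹) • (ei * (ej * ei)) - ei * (ei * ej) := by
    have h : ei ^ 2 * ej - (v + v⁻¹) • (ei * ej * ei) + ej * ei ^ 2 = 0 := serre_rel i j m hij
    simp only [pow_two, mul_assoc] at h
    have h2 := eq_neg_of_add_eq_zero_right h
    rwa [neg_sub] at h2
  have heix : ei * X = v⁻¹ • (X * ei) := by
    rw [hX]
    simp only [mul_sub, sub_mul, smul_mul_assoc, mul_smul_comm, smul_smul, smul_sub, mul_assoc]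
    rw [hserN]
    match_scalars <;> (simp only [v]; field_simp [hsq]; try ring)
  have e1 : X * (e' * X) = v • (X * (X * e')) + α • (X * (ei * k)) := by
    rw [hEA]; simp only [mul_add, mul_smul_comm]
  have e2 : e' * (X * X)
      = (v * v) • (X * (X * e')) + (v * α) • (X * (ei * k)) + α • ((ei * X) * k) := by
    rw [← mul_assoc, hEA, add_mul, smul_mul_assoc, smul_mul_assoc, mul_assoc X e' X, hEA,
      mul_add, mul_smul_comm, mul_smul_comm, smul_add, smul_smul, smul_smul,
      mul_assoc ei k X, hkx X, ← mul_assoc ei X k]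
  have e3 : (ei * X) * k = v⁻¹ • (X * (ei * k)) := by
    rw [heix, smul_mul_assoc, mul_assoc]
  have hS' : (X * X) * e' - (v + v⁻¹) • ((X * e') * X) + e' * (X * X) = 0 := by
    rw [mul_assoc X X e', mul_assoc X e' X, e1, e2, e3]
    match_scalars <;> (simp only [hα, v]; field_simp [hsq]; try ring)
  have t1 : (X * X) * (e' * kv) = ((X * X) * e') * kv := (mul_assoc (X * X) e' kv).symm
  have t2 : (X * (e' * kv)) * X = ((X * e') * X) * kv := by
    rw [← mul_assoc X e' kv, mul_assoc (X * e') kv X, hkvx X, ← mul_assoc]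
  have t3 : (e' * kv) * (X * X) = (e' * (X * X)) * kv := by
    rw [mul_assoc e' kv (X * X), hkvx (X * X), ← mul_assoc]
  have hS2 : (X * X) * (e' * kv) - (v + v⁻¹) • ((X * (e' * kv)) * X)
      + (e' * kv) * (X * X) = 0 := by
    rw [t1, t2, t3]
    have h := congrArg (· * kv) hS'
    simpa only [sub_mul, add_mul, smul_mul_assoc, zero_mul] using h
  calc (T a j i m) ^ 2 * (e' * kv) - (v + v⁻¹) • (T a j i m * (e' * kv) * T a j i m)
      + (e' * kv) * (T a j i m) ^ 2
      = ((v - v⁻¹)⁻¹ * (v - v⁻¹)⁻¹) • ((X * X) * (e' * kv)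
          - (v + v⁻¹) • ((X * (e' * kv)) * X) + (e' * kv) * (X * X)) := by
        rw [hT, pow_two]
        simp only [smul_mul_assoc, mul_smul_comm, smul_smul, smul_sub, smul_add]
        match_scalars <;> ring
    _ = 0 := by rw [hS2, smul_zero]
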